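/- The range (column space) of the 9×9 matrix A₀ defined above equals the 4-dimensional subspace E spanned by |00⟩+|11⟩+|22⟩, λ|01⟩+μ|10⟩, λ|12⟩+μ|21⟩, λ|20⟩+μ|02⟩; in particular A₀ is a positive semidefinite matrix supported on a completely entangled subspace. -/

import Mathlib

open Matrix ComplexOrder

/-- The `9 × 9` matrix `A₀` on `ℂ³ ⊗ ℂ³` (indexed by `Fin 3 × Fin 3`). -/
def A0 (lam mu : ℝ) : Matrix (Fin 3 × Fin 3) (Fin 3 × Fin 3) ℂ :=
  Matrix.of fun p q =>
    if p.1 = p.2 ∧ q.1 = q.2 then 1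
    else if q = p then (if p.2 = p.1 + 1 then ((lam : ℂ)) ^ 2 else ((mu : ℂ)) ^ 2)
    else if q = (p.2, p.1) then 1
    else 0

/-- `|00⟩ + |11⟩ + |22⟩`. -/
def w0 : Fin 3 × Fin 3 → ℂ := fun p => if p.1 = p.2 then 1 else 0

/-- `λ|01⟩ + μ|10⟩`. -/
def w1 (lam mu : ℝ) : Fin 3 × Fin 3 → ℂ :=
  fun p => if p = (0, 1) then (lam : ℂ) else if p = (1, 0) then (mu : ℂ) else 0

/-- `λ|12⟩ + μ|21⟩`. -/
def w2 (lam mu : ℝ) : Fin 3 × Fin 3 → ℂ :=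
  fun p => if p = (1, 2) then (lam : ℂ) else if p = (2, 1) then (mu : ℂ) else 0

/-- `λ|20⟩ + μ|02⟩`. -/
def w3 (lam mu : ℝ) : Fin 3 × Fin 3 → ℂ :=
  fun p => if p = (2, 0) then (lam : ℂ) else if p = (0, 2) then (mu : ℂ) else 0

/-- The 4-dimensional subspace `E` of `ℂ³ ⊗ ℂ³`. -/
noncomputable def Espan (lam mu : ℝ) : Submodule ℂ (Fin 3 × Fin 3 → ℂ) :=
  Submodule.span ℂ {w0, w1 lam mu, w2 lam mu, w3 lam mu}

/-!
`A₀ = Bᵀ B`, where the rows of `B` are the four generators of `E`. These rows are pairwise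
orthogonal with nonzero square norms, so `B Bᵀ` is invertible and the range of `Bᵀ B` is the range
of `Bᵀ`, i.e. `E`; since `B` is real, `Bᵀ B = Bᴴ B` is positive semidefinite.

Every vector of `E` has constant diagonal and satisfies `v (i+1, i) = μ² v (i, i+1)` (indices
mod 3). For a product vector `v (i, j) = x i * y j`, comparing the two factorizations of the
`2 × 2` minors gives `(μ⁶ - 1) v₀₀ v₂₀ = 0` and `v₀₀² = μ² v₂₀²`, so `v₀₀ = 0`; then every minor
through the diagonal kills the off-diagonal entries as well.
-/

theorem Matrix.range_mulVecLin_mul_of_isUnit {m n R : Type*} [Fintype m] [Fintype n]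
    [DecidableEq m] [CommRing R] (M : Matrix n m R) (N : Matrix m n R) (h : IsUnit (N * M)) :
    LinearMap.range (M * N).mulVecLin = LinearMap.range M.mulVecLin := by
  refine le_antisymm (by rw [mulVecLin_mul]; exact LinearMap.range_comp_le_range _ _) ?_
  rintro _ ⟨y, rfl⟩
  refine ⟨M *ᵥ (N * M)⁻¹ *ᵥ y, ?_⟩
  rw [mulVecLin_apply, mulVecLin_apply, mulVec_mulVec, mulVec_mulVec, Matrix.mul_assoc M N,
    mul_nonsing_inv_cancel_right _ _ ((isUnit_iff_isUnit_det _).mp h)]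

def cyclicTwistSubmodule (q : ℂ) : Submodule ℂ (Fin 3 × Fin 3 → ℂ) where
  carrier := {v | (∀ i, v (i, i) = v (0, 0)) ∧ ∀ i, v (i + 1, i) = q * v (i, i + 1)}
  add_mem' := by
    rintro v w ⟨hv, hv'⟩ ⟨hw, hw'⟩
    exact ⟨fun i => by simp [hv i, hw i], fun i => by simp [hv' i, hw' i, mul_add]⟩
  zero_mem' := by simp
  smul_mem' := by
    rintro c v ⟨hv, hv'⟩
    exact ⟨fun i => by simp [hv i], fun i => by simp [hv' i, mul_left_comm]⟩

theorem eq_zero_or_eq_zero_of_mem_cyclicTwistSubmodule {q : ℂ} (hq0 : q ≠ 0) (hq3 : q ^ 3 ≠ 1)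
    {x y : Fin 3 → ℂ} (h : (fun p : Fin 3 × Fin 3 => x p.1 * y p.2) ∈ cyclicTwistSubmodule q) :
    x = 0 ∨ y = 0 := by
  obtain ⟨hdiag, htwist⟩ := h
  simp only at hdiag htwist
  set a := x 0 * y 0
  have hpair (i : Fin 3) : q * (x i * y (i + 1)) ^ 2 = a ^ 2 := by
    linear_combination -(x i * y (i + 1)) * htwist i + x (i + 1) * y (i + 1) * hdiag i
      + a * hdiag (i + 1)
  have hcube : (q ^ 3 - 1) * (a * (x 2 * y 0)) = 0 := by
    have h01 : x 1 * y 0 = q * (x 0 * y 1) := htwist 0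
    have h12 : x 2 * y 1 = q * (x 1 * y 2) := htwist 1
    have h20 : x 0 * y 2 = q * (x 2 * y 0) := htwist 2
    linear_combination (-(x 2 * y 1)) * h01 - q * (x 0 * y 1) * h12 + (x 2 * y 0) * hdiag 1
      - q ^ 2 * ((x 1 * y 1) * h20 + q * (x 2 * y 0) * hdiag 1)
  have has : a * (x 2 * y 0) = 0 := (mul_eq_zero.mp hcube).resolve_left (sub_ne_zero.mpr hq3)
  have ha : a = 0 := by
    have hpair2 : q * (x 2 * y 0) ^ 2 = a ^ 2 := hpair 2
    have ha4 : a ^ 4 = 0 := by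
      linear_combination -a ^ 2 * hpair2 + q * (a * (x 2 * y 0)) * has
    exact pow_eq_zero_iff (by norm_num) |>.mp ha4
  have hnext (i : Fin 3) : x i * y (i + 1) = 0 := by
    have := hpair i
    rw [ha, zero_pow two_ne_zero] at this
    exact pow_eq_zero_iff two_ne_zero |>.mp ((mul_eq_zero.mp this).resolve_left hq0)
  refine vecMulVec_eq_zero.mp (ext fun i j => ?_)
  rw [vecMulVec_apply, Matrix.zero_apply]
  obtain rfl | rfl | rfl : j = i ∨ j = i + 1 ∨ i = j + 1 := by
    fin_cases i <;> fin_cases j <;> decide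
  · rw [hdiag, ha]
  · exact hnext i
  · rw [htwist, hnext, mul_zero]

section

variable (lam mu : ℝ)

def Egens : Matrix (Fin 4) (Fin 3 × Fin 3) ℂ :=
  Matrix.of ![w0, w1 lam mu, w2 lam mu, w3 lam mu]

theorem range_Egens_transpose : LinearMap.range (Egens lam mu)ᵀ.mulVecLin = Espan lam mu := by
  rw [range_mulVecLin, col_transpose]
  change Submodule.span ℂ (Set.range ![w0, w1 lam mu, w2 lam mu, w3 lam mu]) = _
  rw [range_cons, range_cons, range_cons, range_cons_empty]
  simp only [Espan, Set.singleton_union]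

theorem Egens_conjTranspose : (Egens lam mu)ᴴ = (Egens lam mu)ᵀ := by
  ext p k
  fin_cases k <;> simp [Egens, w0, w1, w2, w3, apply_ite (star : ℂ → ℂ)]

theorem Egens_mul_transpose :
    Egens lam mu * (Egens lam mu)ᵀ = diagonal ![3, (lam : ℂ) ^ 2 + (mu : ℂ) ^ 2,
      (lam : ℂ) ^ 2 + (mu : ℂ) ^ 2, (lam : ℂ) ^ 2 + (mu : ℂ) ^ 2] := by
  ext k l
  fin_cases k <;> fin_cases l <;>
    simp [Egens, w0, w1, w2, w3, mul_apply, Fintype.sum_prod_type, Fin.sum_univ_three, sq,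
      add_comm]

variable {lam mu}

theorem isUnit_Egens_mul_transpose (hmul : lam * mu = 1) :
    IsUnit (Egens lam mu * (Egens lam mu)ᵀ) := by
  have hlam : lam ≠ 0 := left_ne_zero_of_mul_eq_one hmul
  have hs : (lam : ℂ) ^ 2 + (mu : ℂ) ^ 2 ≠ 0 := by
    exact_mod_cast (by positivity : lam ^ 2 + mu ^ 2 ≠ 0)
  rw [Egens_mul_transpose, isUnit_diagonal, Pi.isUnit_iff]
  intro k
  fin_cases k <;> simp [hs]

theorem A0_eq_Egens_transpose_mul_Egens (hmul : lam * mu = 1) :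
    A0 lam mu = (Egens lam mu)ᵀ * Egens lam mu := by
  have hc : (lam : ℂ) * mu = 1 := by exact_mod_cast hmul
  ext ⟨i, j⟩ ⟨k, l⟩
  fin_cases i <;> fin_cases j <;> fin_cases k <;> fin_cases l <;>
    simp [A0, Egens, w0, w1, w2, w3, mul_apply, Fin.sum_univ_four, hc, mul_comm, sq]

theorem Espan_le_cyclicTwistSubmodule (hmul : lam * mu = 1) :
    Espan lam mu ≤ cyclicTwistSubmodule ((mu : ℂ) ^ 2) := by
  have hc : (lam : ℂ) * mu = 1 := by exact_mod_cast hmul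
  have hmu : (mu : ℂ) ^ 2 * lam = mu := by linear_combination (mu : ℂ) * hc
  rw [Espan, Submodule.span_le]
  rintro v (rfl | rfl | rfl | rfl) <;> refine ⟨fun i => ?_, fun i => ?_⟩ <;> fin_cases i <;>
    simp [w0, w1, w2, w3, Prod.ext_iff, hmu]

end

theorem A0_range_eq_Espan_general (lam mu : ℝ) (hmu : 0 < mu)
    (hmul : lam * mu = 1) (hne : lam ≠ 1) :
    LinearMap.range (A0 lam mu).mulVecLin = Espan lam mu ∧
    (A0 lam mu).PosSemidef ∧
    (∀ x y : Fin 3 → ℂ, (fun p : Fin 3 × Fin 3 => x p.1 * y p.2) ∈ Espan lam mu →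
      x = 0 ∨ y = 0) := by
  rw [A0_eq_Egens_transpose_mul_Egens hmul]
  refine ⟨?_, ?_, fun x y hxy => ?_⟩
  · rw [range_mulVecLin_mul_of_isUnit _ _ (isUnit_Egens_mul_transpose hmul),
      range_Egens_transpose]
  · rw [← Egens_conjTranspose]
    exact posSemidef_conjTranspose_mul_self _
  · have hmu1 : mu ≠ 1 := by rintro rfl; exact hne (by simpa using hmul)
    have hq3 : ((mu : ℂ) ^ 2) ^ 3 ≠ 1 := by
      rw [← pow_mul]
      exact_mod_cast (pow_eq_one_iff_of_nonneg hmu.le (by norm_num)).not.mpr hmu1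
    exact eq_zero_or_eq_zero_of_mem_cyclicTwistSubmodule (by simpa using hmu.ne') hq3
      (Espan_le_cyclicTwistSubmodule hmul hxy)

/-- The range of `A₀` equals the subspace `E` spanned by the four vectors; in
particular `A₀` is a positive semidefinite matrix supported on a completely entangled
subspace. -/
theorem A0_range_eq_Espan (lam mu : ℝ) (hlam : 0 < lam) (hmu : 0 < mu)
    (hmul : lam * mu = 1) (hne : lam ≠ 1) :
    LinearMap.range (A0 lam mu).mulVecLin = Espan lam mu ∧
    (A0 lam mu).PosSemidef ∧
    (∀ x y : Fin 3 → ℂ, (fun p : Fin 3 × Fin 3 => x p.1 * y p.2) ∈ Espan lam mu →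
      x = 0 ∨ y = 0) :=
  A0_range_eq_Espan_general lam mu hmu hmul hne
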